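/- arXiv:1905.13502 — 2 statements merged into one kernel-verified Lean document; each statement's English description precedes it below -/
import Mathlib

section
/- Fix a ∈ ℝ∖{0} and set Y_a = {v ∈ ℝⁿ : q(v) ∈ a·(ℝ∖{0})²} (equivalently, q(v)/a > 0). Then for every continuous compactly supported f : ℝⁿ → ℂ with support contained in Y_a, the function b ↦ |b|^{n−1}·(∫ f(b·x) dμ_a(x)) is integrable on ℝ∖{0} and ∫_{ℝⁿ} f(v) dv = (1/2)·|2a|·∫_{ℝ∖{0}} (∫ f(b·x) dμ_a(x))·|b|^{n−1} db. (This is the integral identity of Lemma 6.4 of the paper, in the archimedean case F = ℝ; here |b|^{n−1} db = |b|ⁿ · db/|b|.) -/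
open MeasureTheory Set Module
open scoped ContDiff

/-!
Write `F_f(a) = ∫ f dμ_a`. Against test functions of `q`, the Gelfand–Leray identity reads
`∫ χ(q v) f(v) dv = ∫ χ(a) F_f(a) da`. Comparing it for `f` and for `f(t ·)` through the dilation
`v ↦ t v` of Lebesgue measure shows that the continuous functions `c ↦ t² F_f(t² c)` and
`c ↦ |t|ⁿ F_{f(t ·)}(c)` have the same integral against every test function, hence coincide.
With `t = b`, `c = a` the integrand of the theorem becomes `|b| F_f(a b²)`. Since `f` lives on
`Y_a`, `F_f` vanishes on the half-line of sign `-a`, and the substitution `s = a b²` on `b > 0`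
and on `b < 0` turns `∫ f = ∫ F_f(s) ds` into the stated formula.
-/

theorem QuadraticMap.continuous_of_finiteDimensional {E : Type*} [NormedAddCommGroup E]
    [NormedSpace ℝ E] [FiniteDimensional ℝ E] (Q : QuadraticForm ℝ E) : Continuous Q := by
  let B : E →ₗ[ℝ] E →L[ℝ] ℝ :=
    LinearMap.toContinuousLinearMap.toLinearMap ∘ₗ QuadraticMap.associated Q
  have hQ : ⇑Q = fun v => B v v := by
    ext v
    simp [B, QuadraticMap.associated_eq_self_apply]
  rw [hQ]
  exact B.continuous_of_finiteDimensional.clm_apply continuous_id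

theorem IsOpen.continuous_indicator_of_eqOn_zero {X M : Type*} [TopologicalSpace X] [T2Space X]
    [Zero M] [TopologicalSpace M] {s K : Set X} {F : X → M} (hs : IsOpen s)
    (hF : ContinuousOn F s) (hK : IsCompact K) (hKs : K ⊆ s) (hFK : EqOn F 0 (s \ K)) :
    Continuous (s.indicator F) := by
  refine continuous_iff_continuousAt.2 fun x => ?_
  by_cases hx : x ∈ s
  · refine (hF.continuousAt (hs.mem_nhds hx)).congr ?_
    filter_upwards [hs.mem_nhds hx] with y hy using (indicator_of_mem hy F).symm
  · have hxK : x ∉ K := fun h => hx (hKs h)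
    refine (continuousAt_const (y := 0)).congr ?_
    filter_upwards [hK.isClosed.isOpen_compl.mem_nhds hxK] with y hy
    by_cases hys : y ∈ s
    · rw [indicator_of_mem hys, hFK ⟨hys, hy⟩, Pi.zero_apply]
    · rw [indicator_of_notMem hys]

theorem Continuous.eq_of_integral_contDiff_smul_eq {E F : Type*} [NormedAddCommGroup E]
    [NormedSpace ℝ E] [FiniteDimensional ℝ E] [MeasurableSpace E] [BorelSpace E]
    [NormedAddCommGroup F] [NormedSpace ℝ F] [CompleteSpace F] {μ : Measure E}
    [IsLocallyFiniteMeasure μ] [μ.IsOpenPosMeasure] {f f' : E → F} (hf : Continuous f)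
    (hf' : Continuous f')
    (h : ∀ g : E → ℝ, ContDiff ℝ ∞ g → HasCompactSupport g →
      ∫ x, g x • f x ∂μ = ∫ x, g x • f' x ∂μ) :
    f = f' :=
  (hf.ae_eq_iff_eq μ hf').1 <|
    ae_eq_of_integral_contDiff_smul_eq hf.locallyIntegrable hf'.locallyIntegrable h

section HalfLine

variable {F : Type*} [NormedAddCommGroup F]

theorem ae_eq_indicator_Ioi_add_indicator_Ioi_comp_neg {h : ℝ → F} (heven : ∀ x, h (-x) = h x) :
    h =ᵐ[volume] fun x => (Ioi 0).indicator h x + (Ioi 0).indicator h (-x) := by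
  filter_upwards [Measure.ae_ne volume 0] with x hx
  rcases hx.lt_or_gt with hx | hx
  · rw [indicator_of_notMem (s := Ioi 0) (not_lt.2 hx.le),
      indicator_of_mem (s := Ioi 0) (neg_pos.2 hx), heven, zero_add]
  · rw [indicator_of_mem (s := Ioi 0) hx,
      indicator_of_notMem (s := Ioi 0) (not_lt.2 (neg_nonpos.2 hx.le)), add_zero]

theorem integrable_of_even {h : ℝ → F} (heven : ∀ x, h (-x) = h x)
    (hint : IntegrableOn h (Ioi 0)) : Integrable h := by
  have hk := (integrable_indicator_iff measurableSet_Ioi).2 hint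
  exact (hk.add hk.comp_neg).congr (ae_eq_indicator_Ioi_add_indicator_Ioi_comp_neg heven).symm

variable [NormedSpace ℝ F]

theorem integral_eq_two_smul_setIntegral_Ioi_of_even {h : ℝ → F} (heven : ∀ x, h (-x) = h x)
    (hint : IntegrableOn h (Ioi 0)) : ∫ x, h x = (2 : ℝ) • ∫ x in Ioi 0, h x := by
  have hk := (integrable_indicator_iff measurableSet_Ioi).2 hint
  rw [integral_congr_ae (ae_eq_indicator_Ioi_add_indicator_Ioi_comp_neg heven),
    integral_add hk hk.comp_neg, integral_neg_eq_self, integral_indicator measurableSet_Ioi,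
    two_smul]

theorem rpow_two_sub_one_smul_comp_rpow_two {g : ℝ → F} {b : ℝ} (hb : 0 < b) :
    b ^ ((2 : ℝ) - 1) • g (b ^ (2 : ℝ)) = |b| • g (b ^ 2) := by
  norm_num [abs_of_pos hb]

theorem integrableOn_Ioi_abs_smul_comp_sq_iff (g : ℝ → F) :
    IntegrableOn (fun b => |b| • g (b ^ 2)) (Ioi 0) ↔ IntegrableOn g (Ioi 0) := by
  rw [← integrableOn_Ioi_comp_rpow_iff' g two_ne_zero]
  exact integrableOn_congr_fun (fun b hb => (rpow_two_sub_one_smul_comp_rpow_two hb).symm)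
    measurableSet_Ioi

theorem setIntegral_Ioi_abs_smul_comp_sq (g : ℝ → F) :
    ∫ b in Ioi 0, |b| • g (b ^ 2) = (2 : ℝ)⁻¹ • ∫ s in Ioi 0, g s := by
  rw [← integral_comp_rpow_Ioi_of_pos (g := g) two_pos, ← integral_smul]
  refine setIntegral_congr_fun measurableSet_Ioi fun b hb => ?_
  rw [mul_smul, inv_smul_smul₀ two_ne_zero, rpow_two_sub_one_smul_comp_rpow_two hb]

theorem MeasureTheory.Integrable.abs_smul_comp_mul_sq {g : ℝ → F} (hg : Integrable g) {a : ℝ}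
    (ha : a ≠ 0) : Integrable fun b => |b| • g (a * b ^ 2) :=
  integrable_of_even (fun b => by rw [abs_neg, neg_sq])
    ((integrableOn_Ioi_abs_smul_comp_sq_iff fun s => g (a * s)).2
      (hg.comp_mul_left' ha).integrableOn)

theorem integral_abs_smul_comp_mul_sq {g : ℝ → F} (hg : Integrable g) {a : ℝ} (ha : a ≠ 0)
    (hg0 : ∀ s, a * s < 0 → g s = 0) :
    ∫ b, |b| • g (a * b ^ 2) = |a⁻¹| • ∫ s, g s := by
  have hga : ∀ s ∉ Ici (0 : ℝ), g (a * s) = 0 := fun s hs =>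
    hg0 _ (by nlinarith [lt_of_not_ge (show ¬(0 : ℝ) ≤ s from hs), sq_pos_of_ne_zero ha])
  rw [integral_eq_two_smul_setIntegral_Ioi_of_even (fun b => by rw [abs_neg, neg_sq])
      ((integrableOn_Ioi_abs_smul_comp_sq_iff fun s => g (a * s)).2
        (hg.comp_mul_left' ha).integrableOn),
    setIntegral_Ioi_abs_smul_comp_sq (fun s => g (a * s)), smul_inv_smul₀ two_ne_zero,
    ← integral_Ici_eq_integral_Ioi, setIntegral_eq_integral_of_forall_compl_eq_zero hga,
    Measure.integral_comp_mul_left]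

end HalfLine

section FiberIntegral

variable {E : Type*} [MeasurableSpace E] {μ : ℝ → Measure E} {f : E → ℂ}

/-- Extended by `0` at `a = 0`, where the family provides no measure. -/
noncomputable def fiberIntegral (μ : ℝ → Measure E) (f : E → ℂ) : ℝ → ℂ :=
  ({0}ᶜ : Set ℝ).indicator fun a => ∫ v, f v ∂μ a

theorem fiberIntegral_of_ne_zero {a : ℝ} (ha : a ≠ 0) :
    fiberIntegral μ f a = ∫ v, f v ∂μ a :=
  indicator_of_mem (s := {0}ᶜ) ha _

theorem fiberIntegral_zero : fiberIntegral μ f 0 = 0 :=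
  indicator_of_notMem (s := {0}ᶜ) (fun h => h rfl) _

end FiberIntegral

section GelfandLeray

variable {E : Type*} [NormedAddCommGroup E] [NormedSpace ℝ E] {q : QuadraticForm ℝ E} {f : E → ℂ}

structure IsTestFunctionOffNullCone (q : QuadraticForm ℝ E) (f : E → ℂ) : Prop where
  continuous : Continuous f
  hasCompactSupport : HasCompactSupport f
  ne_zero : ∀ v ∈ tsupport f, q v ≠ 0

namespace IsTestFunctionOffNullCone

theorem comp_smul (hf : IsTestFunctionOffNullCone q f) {t : ℝ} (ht : t ≠ 0) :
    IsTestFunctionOffNullCone q fun x => f (t • x) where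
  continuous := hf.continuous.comp (continuous_const_smul t)
  hasCompactSupport := hf.hasCompactSupport.comp_smul ht
  ne_zero v hv := by
    have hqtv := hf.ne_zero _ (tsupport_comp_subset_preimage f (continuous_const_smul t) hv)
    rw [QuadraticMap.map_smul, smul_eq_mul] at hqtv
    exact right_ne_zero_of_mul hqtv

theorem smul_comp [FiniteDimensional ℝ E] (hf : IsTestFunctionOffNullCone q f) {ψ : ℝ → ℝ}
    (hψ : Continuous ψ) : IsTestFunctionOffNullCone q fun v => ψ (q v) • f v where
  continuous := (hψ.comp q.continuous_of_finiteDimensional).smul hf.continuous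
  hasCompactSupport := hf.hasCompactSupport.smul_left (f := fun v => ψ (q v))
  ne_zero v hv := hf.ne_zero v (tsupport_smul_subset_right (fun v => ψ (q v)) f hv)

end IsTestFunctionOffNullCone

variable [MeasurableSpace E]

structure IsGelfandLerayFamily (ν : Measure E) (q : QuadraticForm ℝ E) (μ : ℝ → Measure E) :
    Prop where
  measure_setOf_ne : ∀ a : ℝ, a ≠ 0 → μ a {v | q v ≠ a} = 0
  continuousOn : ∀ f, IsTestFunctionOffNullCone q f →
    ContinuousOn (fun a => ∫ v, f v ∂μ a) {a | a ≠ 0}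
  exists_isCompact : ∀ f, IsTestFunctionOffNullCone q f →
    ∃ K : Set ℝ, IsCompact K ∧ (0 : ℝ) ∉ K ∧ ∀ a : ℝ, a ≠ 0 → a ∉ K → ∫ v, f v ∂μ a = 0
  integral_eq : ∀ f, IsTestFunctionOffNullCone q f →
    ∫ v, f v ∂ν = ∫ a in {a : ℝ | a ≠ 0}, ∫ v, f v ∂μ a

variable {ν : Measure E} {μ : ℝ → Measure E}

namespace IsGelfandLerayFamily

theorem ae_eq (hμ : IsGelfandLerayFamily ν q μ) {a : ℝ} (ha : a ≠ 0) : ∀ᵐ v ∂μ a, q v = a := by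
  filter_upwards [measure_eq_zero_iff_ae_notMem.1 (hμ.measure_setOf_ne a ha)] with v hv
  exact not_not.1 hv

theorem fiberIntegral_smul_comp (hμ : IsGelfandLerayFamily ν q μ) (ψ : ℝ → ℝ) (a : ℝ) :
    fiberIntegral μ (fun v => ψ (q v) • f v) a = ψ a • fiberIntegral μ f a := by
  rcases eq_or_ne a 0 with rfl | ha
  · rw [fiberIntegral_zero, fiberIntegral_zero, smul_zero]
  rw [fiberIntegral_of_ne_zero ha, fiberIntegral_of_ne_zero ha, ← integral_smul]
  refine integral_congr_ae ?_
  filter_upwards [hμ.ae_eq ha] with v hv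
  rw [hv]

theorem fiberIntegral_eq_zero (hμ : IsGelfandLerayFamily ν q μ) {a : ℝ}
    (hf : ∀ v, q v = a → f v = 0) : fiberIntegral μ f a = 0 := by
  rcases eq_or_ne a 0 with rfl | ha
  · exact fiberIntegral_zero
  rw [fiberIntegral_of_ne_zero ha]
  refine integral_eq_zero_of_ae ?_
  filter_upwards [hμ.ae_eq ha] with v hv using hf v hv

theorem continuous_fiberIntegral (hμ : IsGelfandLerayFamily ν q μ)
    (hf : IsTestFunctionOffNullCone q f) : Continuous (fiberIntegral μ f) := by
  obtain ⟨K, hK, hK0, hfK⟩ := hμ.exists_isCompact f hf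
  exact isOpen_compl_singleton.continuous_indicator_of_eqOn_zero (hμ.continuousOn f hf) hK
    (fun a ha h => hK0 (h ▸ ha)) fun a ha => hfK a ha.1 ha.2

theorem hasCompactSupport_fiberIntegral (hμ : IsGelfandLerayFamily ν q μ)
    (hf : IsTestFunctionOffNullCone q f) : HasCompactSupport (fiberIntegral μ f) := by
  obtain ⟨K, hK, -, hfK⟩ := hμ.exists_isCompact f hf
  refine HasCompactSupport.intro hK fun a ha => ?_
  rcases eq_or_ne a 0 with rfl | ha0
  · exact fiberIntegral_zero
  rw [fiberIntegral_of_ne_zero ha0, hfK a ha0 ha]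

theorem integral_eq_integral_fiberIntegral (hμ : IsGelfandLerayFamily ν q μ)
    (hf : IsTestFunctionOffNullCone q f) : ∫ v, f v ∂ν = ∫ a, fiberIntegral μ f a := by
  rw [hμ.integral_eq f hf, fiberIntegral, integral_indicator (measurableSet_singleton 0).compl]
  rfl

theorem integral_smul_comp (hμ : IsGelfandLerayFamily ν q μ) [FiniteDimensional ℝ E]
    (hf : IsTestFunctionOffNullCone q f) {ψ : ℝ → ℝ} (hψ : Continuous ψ) :
    ∫ v, ψ (q v) • f v ∂ν = ∫ a, ψ a • fiberIntegral μ f a := by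
  simp_rw [hμ.integral_eq_integral_fiberIntegral (hf.smul_comp hψ), hμ.fiberIntegral_smul_comp]

theorem sq_smul_fiberIntegral_sq_mul (hμ : IsGelfandLerayFamily ν q μ) [FiniteDimensional ℝ E]
    [BorelSpace E] [ν.IsAddHaarMeasure] (hf : IsTestFunctionOffNullCone q f) {t : ℝ}
    (ht : t ≠ 0) (s : ℝ) :
    t ^ 2 • fiberIntegral μ f (t ^ 2 * s) =
      |t| ^ finrank ℝ E • fiberIntegral μ (fun x => f (t • x)) s := by
  have ht2 : t ^ 2 ≠ 0 := pow_ne_zero 2 ht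
  suffices h : (fun s => t ^ 2 • fiberIntegral μ f (t ^ 2 * s)) =
      fun s => |t| ^ finrank ℝ E • fiberIntegral μ (fun x => f (t • x)) s from congrFun h s
  refine Continuous.eq_of_integral_contDiff_smul_eq (μ := volume)
    ((continuous_const_smul _).comp
      ((hμ.continuous_fiberIntegral hf).comp (continuous_const_mul _)))
    ((continuous_const_smul _).comp (hμ.continuous_fiberIntegral (hf.comp_smul ht)))
    fun χ hχ _ => ?_
  have hψ : Continuous fun a => χ (a / t ^ 2) := hχ.continuous.comp (continuous_id.div_const _)
  calc ∫ s, χ s • t ^ 2 • fiberIntegral μ f (t ^ 2 * s)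
      = t ^ 2 • ∫ s, χ (t ^ 2 * s / t ^ 2) • fiberIntegral μ f (t ^ 2 * s) := by
        rw [← integral_smul]
        simp_rw [smul_comm _ (t ^ 2), mul_div_cancel_left₀ _ ht2]
    _ = ∫ a, χ (a / t ^ 2) • fiberIntegral μ f a := by
        rw [Measure.integral_comp_mul_left (fun a => χ (a / t ^ 2) • fiberIntegral μ f a),
          abs_inv, abs_of_nonneg (sq_nonneg t), smul_inv_smul₀ ht2]
    _ = ∫ v, χ (q v / t ^ 2) • f v ∂ν := (hμ.integral_smul_comp hf hψ).symm
    _ = |t| ^ finrank ℝ E • ∫ v, χ (q (t • v) / t ^ 2) • f (t • v) ∂ν := by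
        rw [Measure.integral_comp_smul ν (fun v => χ (q v / t ^ 2) • f v) t, abs_inv, abs_pow,
          smul_inv_smul₀ (pow_ne_zero _ (abs_ne_zero.2 ht))]
    _ = |t| ^ finrank ℝ E • ∫ v, χ (q v) • f (t • v) ∂ν := by
        simp_rw [QuadraticMap.map_smul, smul_eq_mul, ← sq, mul_div_cancel_left₀ _ ht2]
    _ = ∫ s, χ s • |t| ^ finrank ℝ E • fiberIntegral μ (fun x => f (t • x)) s := by
        rw [hμ.integral_smul_comp (hf.comp_smul ht) hχ.continuous, ← integral_smul]
        simp_rw [smul_comm (|t| ^ finrank ℝ E)]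

theorem abs_pow_pred_smul_integral_comp_smul (hμ : IsGelfandLerayFamily ν q μ)
    [FiniteDimensional ℝ E] [BorelSpace E] [ν.IsAddHaarMeasure]
    (hf : IsTestFunctionOffNullCone q f) (hE : 1 ≤ finrank ℝ E) {a b : ℝ} (ha : a ≠ 0)
    (hb : b ≠ 0) :
    |b| ^ (finrank ℝ E - 1) • ∫ x, f (b • x) ∂μ a = |b| • fiberIntegral μ f (a * b ^ 2) := by
  have hscale := hμ.sq_smul_fiberIntegral_sq_mul hf hb a
  rw [fiberIntegral_of_ne_zero ha] at hscale
  refine smul_right_injective ℂ (abs_ne_zero.2 hb) ?_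
  dsimp only
  rw [smul_smul, ← pow_succ', Nat.sub_add_cancel hE, ← hscale, smul_smul, abs_mul_abs_self,
    ← sq, mul_comm a]

end IsGelfandLerayFamily

end GelfandLeray

theorem stmt2_general (n : ℕ) (hn : 1 ≤ n)
    (q : QuadraticForm ℝ (Fin n → ℝ))
    (μ : ℝ → Measure (Fin n → ℝ))
    (hsupp : ∀ a : ℝ, a ≠ 0 → μ a {v : Fin n → ℝ | q v ≠ a} = 0)
    (hcont : ∀ f : (Fin n → ℝ) → ℂ, Continuous f → HasCompactSupport f →
      (∀ v ∈ tsupport f, q v ≠ 0) →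
      ContinuousOn (fun a : ℝ => ∫ v, f v ∂ μ a) {a : ℝ | a ≠ 0} ∧
      ∃ K : Set ℝ, IsCompact K ∧ (0 : ℝ) ∉ K ∧
        ∀ a : ℝ, a ≠ 0 → a ∉ K → (∫ v, f v ∂ μ a) = 0)
    (hGL : ∀ f : (Fin n → ℝ) → ℂ, Continuous f → HasCompactSupport f →
      (∀ v ∈ tsupport f, q v ≠ 0) →
      (∫ v, f v) = ∫ a in {a : ℝ | a ≠ 0}, (∫ v, f v ∂ μ a))
    (a : ℝ) (ha : a ≠ 0)
    (f : (Fin n → ℝ) → ℂ) (hf : Continuous f) (hfc : HasCompactSupport f)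
    (hfY : tsupport f ⊆ {v : Fin n → ℝ | ∃ b : ℝ, b ≠ 0 ∧ q v = a * b ^ 2}) :
    IntegrableOn (fun b : ℝ => |b| ^ (n - 1) • ∫ x, f (b • x) ∂ μ a)
      {b : ℝ | b ≠ 0} volume ∧
    (∫ v, f v)
      = (1 / 2 * |2 * a|) •
          ∫ b in {b : ℝ | b ≠ 0}, |b| ^ (n - 1) • (∫ x, f (b • x) ∂ μ a) := by
  have hμ : IsGelfandLerayFamily volume q μ :=
    ⟨hsupp, fun f hf => (hcont f hf.1 hf.2 hf.3).1, fun f hf => (hcont f hf.1 hf.2 hf.3).2,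
      fun f hf => hGL f hf.1 hf.2 hf.3⟩
  have htest : IsTestFunctionOffNullCone q f := ⟨hf, hfc, fun v hv => by
    obtain ⟨b, hb, hqv⟩ := hfY hv
    rw [hqv]
    exact mul_ne_zero ha (pow_ne_zero 2 hb)⟩
  set G := fiberIntegral μ f
  have hG : Integrable G := (hμ.continuous_fiberIntegral htest).integrable_of_hasCompactSupport
    (hμ.hasCompactSupport_fiberIntegral htest)
  have hG0 : ∀ s, a * s < 0 → G s = 0 := fun s hs => hμ.fiberIntegral_eq_zero fun v hv => by
    by_contra hfv
    obtain ⟨b, hb, hqv⟩ := hfY (subset_tsupport f hfv)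
    have hsq : a * s = (a * b) ^ 2 := by rw [← hv, hqv]; ring
    exact hs.not_ge (hsq ▸ sq_nonneg _)
  have hrw : EqOn (fun b : ℝ => |b| ^ (n - 1) • ∫ x, f (b • x) ∂μ a)
      (fun b => |b| • G (a * b ^ 2)) {b | b ≠ 0} := fun b hb => by
    simpa only [finrank_fin_fun] using
      hμ.abs_pow_pred_smul_integral_comp_smul htest (by simpa using hn) ha hb
  refine ⟨(hG.abs_smul_comp_mul_sq ha).integrableOn.congr_fun hrw.symm
    (measurableSet_singleton 0).compl, ?_⟩
  calc ∫ v, f v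
      = (1 / 2 * |2 * a|) • |a⁻¹| • ∫ s, G s := by
        rw [hμ.integral_eq_integral_fiberIntegral htest, smul_smul, abs_mul, abs_two, abs_inv,
          show 1 / 2 * (2 * |a|) * |a|⁻¹ = 1 by field_simp, one_smul]
    _ = (1 / 2 * |2 * a|) • ∫ b in ({0}ᶜ : Set ℝ), |b| • G (a * b ^ 2) := by
        rw [restrict_compl_singleton, integral_abs_smul_comp_mul_sq hG ha hG0]
    _ = _ := congrArg _ (setIntegral_congr_fun (measurableSet_singleton 0).compl hrw).symm

/-- integral identity of Lemma 6.4 of the paper, case `F = ℝ`: for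
`a ≠ 0` and `f` continuous, compactly supported with support in
`Y_a = {v : q v ∈ a·(ℝ∖{0})²}`, the function `b ↦ |b|^{n-1} · ∫ f(b•x) dμ_a(x)` is
integrable on `ℝ∖{0}` and
`∫ f dv = (1/2)·|2a| · ∫_{b ≠ 0} (∫ f(b•x) dμ_a(x)) |b|^{n-1} db`. -/
theorem stmt2 (n : ℕ) (hn : 1 ≤ n)
    (q : QuadraticForm ℝ (Fin n → ℝ))
    (hq : ∀ v : Fin n → ℝ, (∀ w : Fin n → ℝ, q (v + w) - q v - q w = 0) → v = 0)
    (μ : ℝ → Measure (Fin n → ℝ))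
    (hreg : ∀ a : ℝ, a ≠ 0 → (μ a).Regular)
    (hsupp : ∀ a : ℝ, a ≠ 0 → μ a {v : Fin n → ℝ | q v ≠ a} = 0)
    (hcont : ∀ f : (Fin n → ℝ) → ℂ, Continuous f → HasCompactSupport f →
      (∀ v ∈ tsupport f, q v ≠ 0) →
      ContinuousOn (fun a : ℝ => ∫ v, f v ∂ μ a) {a : ℝ | a ≠ 0} ∧
      ∃ K : Set ℝ, IsCompact K ∧ (0 : ℝ) ∉ K ∧
        ∀ a : ℝ, a ≠ 0 → a ∉ K → (∫ v, f v ∂ μ a) = 0)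
    (hGL : ∀ f : (Fin n → ℝ) → ℂ, Continuous f → HasCompactSupport f →
      (∀ v ∈ tsupport f, q v ≠ 0) →
      (∫ v, f v) = ∫ a in {a : ℝ | a ≠ 0}, (∫ v, f v ∂ μ a))
    (a : ℝ) (ha : a ≠ 0)
    (f : (Fin n → ℝ) → ℂ) (hf : Continuous f) (hfc : HasCompactSupport f)
    (hfY : tsupport f ⊆ {v : Fin n → ℝ | ∃ b : ℝ, b ≠ 0 ∧ q v = a * b ^ 2}) :
    IntegrableOn (fun b : ℝ => |b| ^ (n - 1) • ∫ x, f (b • x) ∂ μ a)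
      {b : ℝ | b ≠ 0} volume ∧
    (∫ v, f v)
      = (1 / 2 * |2 * a|) •
          ∫ b in {b : ℝ | b ≠ 0}, |b| ^ (n - 1) • (∫ x, f (b • x) ∂ μ a) :=
  stmt2_general n hn q μ hsupp hcont hGL a ha f hf hfc hfY
end

section
/- (i) Ψ is rapidly decreasing as |a| → ∞: for every k ∈ ℕ there exists C_k > 0 such that |Ψ(a)| ≤ C_k·|a|^{−k} for all a with |a| ≥ 1. (ii) There exists C > 0 such that |Ψ(a)| ≤ C·|a|^{−1} for all a with 0 < |a| ≤ 1. (This is the Lemma in §12.12 of the paper, in the archimedean case over ℚ where the lattice k ⊂ 𝔸 is replaced by ℤ ⊂ ℝ; the bound near 0 is proved by Poisson summation.) -/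
/-!
For a Schwartz function, `|x|^k ‖φ x‖ ≤ C (1 + x²)⁻¹`, and since `|m| ≥ 1` this gives
`|a|^k ‖φ (a m)‖ ≤ C (1 + (a m)²)⁻¹` for every nonzero integer `m`. The sum over `m ≠ 0` of
`(1 + (a m)²)⁻¹` is at most `4 / |a|`: each term is bounded by `2 / |a|` times a difference
`u n - u (n + 1)` with `u n = (1 + |a| n)⁻¹`, and these telescope to `u 0 = 1`. Hence
`|a|^k ‖Ψ a‖ ≤ 4 C / |a|` for all `a ≠ 0`, which gives both the decay at infinity and the bound
near `0` (the case `k = 0`), without Poisson summation.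
-/

open Filter Topology

lemma hasSum_sub_succ_of_antitone {u : ℕ → ℝ} (hu : Antitone u) (hlim : Tendsto u atTop (𝓝 0)) :
    HasSum (fun n ↦ u n - u (n + 1)) (u 0) := by
  rw [hasSum_iff_tendsto_nat_of_nonneg (fun n ↦ sub_nonneg.2 (hu n.le_succ))]
  simp only [Finset.sum_range_sub']
  simpa using tendsto_const_nhds.sub hlim

lemma hasSum_inv_one_add_mul_sub {t : ℝ} (ht : 0 < t) :
    HasSum (fun n : ℕ ↦ (1 + t * n)⁻¹ - (1 + t * (n + 1 : ℕ))⁻¹) 1 := by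
  have hanti : Antitone fun n : ℕ ↦ (1 + t * n)⁻¹ := fun m n hmn ↦
    inv_anti₀ (by positivity) (by gcongr)
  have hlim : Tendsto (fun n : ℕ ↦ (1 + t * n)⁻¹) atTop (𝓝 0) :=
    (tendsto_atTop_add_const_left _ 1
      (tendsto_natCast_atTop_atTop.const_mul_atTop ht)).inv_tendsto_atTop
  simpa using hasSum_sub_succ_of_antitone hanti hlim

lemma inv_one_add_sq_le {t : ℝ} (ht : 0 < t) (n : ℕ) :
    (1 + (t * (n + 1)) ^ 2)⁻¹ ≤ 2 / t * ((1 + t * n)⁻¹ - (1 + t * (n + 1 : ℕ))⁻¹) := by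
  have h₁ : 0 < 1 + t * n := by positivity
  have h₂ : 0 < 1 + t * (n + 1) := by positivity
  have hdiff : (1 + t * n)⁻¹ - (1 + t * (n + 1))⁻¹ = t / ((1 + t * n) * (1 + t * (n + 1))) := by
    field_simp
    ring
  push_cast
  rw [hdiff, ← mul_div_assoc, div_mul_cancel₀ _ ht.ne', inv_eq_one_div,
    div_le_div_iff₀ (by positivity) (by positivity)]
  -- With `y = 1 + t (n + 1)`: `(1 + t n) y ≤ y² ≤ 2 (1 + (y - 1)²)`, the last being `(y - 2)² ≥ 0`.
  nlinarith [sq_nonneg (t * (n + 1) - 1), mul_le_mul_of_nonneg_right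
    (show 1 + t * n ≤ 1 + t * (n + 1) by nlinarith) h₂.le]

lemma norm_tsum_int_le_of_hasSum {E : Type*} [NormedAddCommGroup E] [CompleteSpace E]
    {f : ℤ → E} {g : ℕ → ℝ} {B : ℝ} (hg : HasSum g B) (h0 : f 0 = 0)
    (hpos : ∀ n : ℕ, ‖f (n + 1)‖ ≤ g n) (hneg : ∀ n : ℕ, ‖f (-(n + 1))‖ ≤ g n) :
    ‖∑' m, f m‖ ≤ 2 * B := by
  rw [tsum_of_add_one_of_neg_add_one (.of_norm_bounded hg.summable hpos)
    (.of_norm_bounded hg.summable hneg), h0, add_zero, two_mul]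
  exact (norm_add_le _ _).trans
    (add_le_add (tsum_of_norm_bounded hg hpos) (tsum_of_norm_bounded hg hneg))

lemma norm_tsum_int_le_of_le_inv_one_add_sq {E : Type*} [NormedAddCommGroup E] [CompleteSpace E]
    {f : ℤ → E} {C a : ℝ} (ha : a ≠ 0) (hC : 0 ≤ C) (h0 : f 0 = 0)
    (hf : ∀ m ≠ 0, ‖f m‖ ≤ C * (1 + (a * m) ^ 2)⁻¹) :
    ‖∑' m, f m‖ ≤ 4 * C * |a|⁻¹ := by
  have ht : 0 < |a| := abs_pos.2 ha
  have hbound (m : ℤ) (n : ℕ) (hm0 : m ≠ 0) (hm : (m : ℝ) ^ 2 = (n + 1) ^ 2) :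
      ‖f m‖ ≤ C * (2 / |a|) * ((1 + |a| * n)⁻¹ - (1 + |a| * (n + 1 : ℕ))⁻¹) := by
    calc ‖f m‖ ≤ C * (1 + (|a| * (n + 1)) ^ 2)⁻¹ := by
          rw [mul_pow, ← hm, sq_abs, ← mul_pow]; exact hf m hm0
      _ ≤ _ := by rw [mul_assoc]; exact mul_le_mul_of_nonneg_left (inv_one_add_sq_le ht n) hC
  have := norm_tsum_int_le_of_hasSum ((hasSum_inv_one_add_mul_sub ht).mul_left (C * (2 / |a|))) h0
    (fun n ↦ hbound _ n (by omega) (by push_cast; ring))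
    (fun n ↦ hbound _ n (by omega) (by push_cast; ring))
  calc ‖∑' m, f m‖ ≤ 2 * (C * (2 / |a|) * 1) := this
    _ = 4 * C * |a|⁻¹ := by ring

lemma SchwartzMap.exists_pow_mul_norm_le_inv_one_add_sq {F : Type*} [NormedAddCommGroup F]
    [NormedSpace ℝ F] (φ : SchwartzMap ℝ F) (k : ℕ) :
    ∃ C, 0 < C ∧ ∀ x : ℝ, |x| ^ k * ‖φ x‖ ≤ C * (1 + x ^ 2)⁻¹ := by
  refine ⟨SchwartzMap.seminorm ℝ k 0 φ + SchwartzMap.seminorm ℝ (k + 2) 0 φ + 1, by positivity,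
    fun x ↦ ?_⟩
  have hk := φ.norm_pow_mul_le_seminorm ℝ k x
  have hk2 := φ.norm_pow_mul_le_seminorm ℝ (k + 2) x
  rw [Real.norm_eq_abs] at hk hk2
  rw [← div_eq_mul_inv, le_div_iff₀ (by positivity), ← sq_abs x, mul_add, mul_one]
  have : |x| ^ k * ‖φ x‖ * |x| ^ 2 = |x| ^ (k + 2) * ‖φ x‖ := by ring
  linarith

lemma SchwartzMap.exists_pow_mul_norm_tsum_le {F : Type*} [NormedAddCommGroup F]
    [NormedSpace ℝ F] [CompleteSpace F] (φ : SchwartzMap ℝ F) (k : ℕ) :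
    ∃ C, 0 < C ∧ ∀ a : ℝ, a ≠ 0 →
      |a| ^ k * ‖∑' m : ℤ, if m = 0 then 0 else φ (a * m)‖ ≤ C * |a|⁻¹ := by
  obtain ⟨C, hC, hφ⟩ := φ.exists_pow_mul_norm_le_inv_one_add_sq k
  refine ⟨4 * C, by positivity, fun a ha ↦ ?_⟩
  have hak : 0 < |a| ^ k := by positivity
  have hf (m : ℤ) (hm : m ≠ 0) :
      ‖if m = 0 then 0 else φ (a * m)‖ ≤ C / |a| ^ k * (1 + (a * m) ^ 2)⁻¹ := by
    have hm1 : 1 ≤ |(m : ℝ)| := by exact_mod_cast Int.one_le_abs hm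
    rw [if_neg hm, div_mul_eq_mul_div, le_div_iff₀ hak, mul_comm]
    have ha_le : |a| ≤ |a * m| := by
      rw [abs_mul]; exact le_mul_of_one_le_right (abs_nonneg a) hm1
    calc |a| ^ k * ‖φ (a * m)‖ ≤ |a * m| ^ k * ‖φ (a * m)‖ := by gcongr
      _ ≤ _ := hφ _
  have := norm_tsum_int_le_of_le_inv_one_add_sq ha (by positivity) (by simp) hf
  calc |a| ^ k * ‖∑' m : ℤ, if m = 0 then 0 else φ (a * m)‖
      ≤ |a| ^ k * (4 * (C / |a| ^ k) * |a|⁻¹) := by gcongr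
    _ = 4 * C * |a|⁻¹ := by field_simp

/-- Lemma in §12.12 of the paper, archimedean case over ℚ: for a
Schwartz function `φ : ℝ → ℂ` and `Ψ(a) = ∑_{m ∈ ℤ, m ≠ 0} φ(a·m)`:
(i) `Ψ` is rapidly decreasing as `|a| → ∞`;
(ii) there is `C > 0` with `|Ψ(a)| ≤ C·|a|⁻¹` for `0 < |a| ≤ 1`. -/
theorem stmt9 (φ : SchwartzMap ℝ ℂ) (Ψ : ℝ → ℂ)
    (hΨ : ∀ a : ℝ, Ψ a = ∑' m : ℤ, if m = 0 then 0 else φ (a * (m : ℝ))) :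
    (∀ k : ℕ, ∃ C : ℝ, 0 < C ∧ ∀ a : ℝ, 1 ≤ |a| → ‖Ψ a‖ ≤ C * |a| ^ (-(k : ℤ))) ∧
    (∃ C : ℝ, 0 < C ∧ ∀ a : ℝ, 0 < |a| → |a| ≤ 1 → ‖Ψ a‖ ≤ C * |a|⁻¹) := by
  refine ⟨fun k ↦ ?_, ?_⟩
  · obtain ⟨C, hC, hΨC⟩ := φ.exists_pow_mul_norm_tsum_le k
    refine ⟨C, hC, fun a ha ↦ ?_⟩
    have ha0 : 0 < |a| := one_pos.trans_le ha
    have := hΨC a (abs_pos.1 ha0)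
    rw [← hΨ] at this
    rw [zpow_neg, zpow_natCast, ← div_eq_mul_inv, le_div_iff₀ (by positivity), mul_comm]
    calc |a| ^ k * ‖Ψ a‖ ≤ C * |a|⁻¹ := this
      _ ≤ C := mul_le_of_le_one_right hC.le (inv_le_one_of_one_le₀ ha)
  · obtain ⟨C, hC, hΨC⟩ := φ.exists_pow_mul_norm_tsum_le 0
    refine ⟨C, hC, fun a ha _ ↦ ?_⟩
    simpa [← hΨ] using hΨC a (abs_pos.1 ha)
end
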